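/- arXiv:2505.00939 — 3 statements merged into one kernel-verified Lean document; each statement's English description precedes it below -/
import Mathlib

section
/- If ρ_A and ρ_B are quasi-preorders (transitive and left-quasi-reflexive relations), then the relation ρ_{A⇒B} on functions from A to B, defined by (f,f') ∈ ρ_{A⇒B} iff for all (s,s') ∈ ρ_A both (f s, f' s') ∈ ρ_B and (f s, f s') ∈ ρ_B, is again a quasi-preorder. -/
/-- A quasi-preorder is a transitive and left-quasi-reflexive relation. -/
def IsQuasiPreorder {X : Type*} (r : X → X → Prop) : Prop :=
  (∀ x y z, r x y → r y z → r x z) ∧ (∀ x y, r x y → r x x)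

/-- The function-space lifting of two relations. -/
def funRel {A B : Type*} (ρA : A → A → Prop) (ρB : B → B → Prop)
    (f f' : A → B) : Prop :=
  ∀ s s', ρA s s' → ρB (f s) (f' s') ∧ ρB (f s) (f s')

theorem funRel_isQuasiPreorder {A B : Type*}
    (ρA : A → A → Prop) (ρB : B → B → Prop)
    (hA : IsQuasiPreorder ρA) (hB : IsQuasiPreorder ρB) :
    IsQuasiPreorder (funRel ρA ρB) := by
  obtain ⟨hAt, hAr⟩ := hA
  obtain ⟨hBt, hBr⟩ := hB
  constructor
  · intro f g h hfg hgh s s' hss'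
    have hss : ρA s s := hAr _ _ hss'
    refine ⟨hBt _ _ _ (hfg s s hss).1 (hgh s s' hss').1, (hfg s s' hss').2⟩
  · intro f g hfg s s' hss'
    exact ⟨(hfg s s' hss').2, (hfg s s' hss').2⟩
end

section
/- Let s be a quasi-reflexive Q-relation on X (s(x,y) ≤ s(x,x) for all x,y). Then s is a quasi²-metric (i.e., additionally transitive: s(x,z) ⊗ s(z,y) ≤ s(x,y)) if and only if there exists a quasi-metric q with s ≤ q pointwise and s(x,z) ⊗ q(z,y) ≤ s(x,y) for all x,y,z. -/
/-!
For the nontrivial direction take `q z y := ⨅ x, s x z ⇨ᵣ s x y`, the largest relation with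
`s x z * q z y ≤ s x y`. Maximality gives everything else: `q` is transitive because `q * q`
also satisfies the defining inequality, `q x x = ⊤` because `⊤ = 1` satisfies it on the
diagonal, and `s ≤ q` is exactly the transitivity of `s`.
-/

open Quantale

section ResidualRel

variable {X Q : Type*} [Semigroup Q] [CompleteLattice Q] [IsQuantale Q] {s : X → X → Q}

def residualRel (s : X → X → Q) (z y : X) : Q := ⨅ x, s x z ⇨ᵣ s x y

theorem le_residualRel_iff {a : Q} {z y : X} :
    a ≤ residualRel s z y ↔ ∀ x, s x z * a ≤ s x y := by
  simp only [residualRel, le_iInf_iff, rightMulResiduation_le_iff_mul_le]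

theorem mul_residualRel_le (x y z : X) : s x z * residualRel s z y ≤ s x y :=
  le_residualRel_iff.1 le_rfl x

theorem residualRel_mul_le (x y z : X) :
    residualRel s x z * residualRel s z y ≤ residualRel s x y :=
  le_residualRel_iff.2 fun w =>
    calc s w x * (residualRel s x z * residualRel s z y)
        = s w x * residualRel s x z * residualRel s z y := (mul_assoc _ _ _).symm
      _ ≤ s w z * residualRel s z y := mul_le_mul_left (mul_residualRel_le w z x) _
      _ ≤ s w y := mul_residualRel_le w y z

theorem le_residualRel_of_transitive (hs : ∀ x y z, s x z * s z y ≤ s x y) (x y : X) :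
    s x y ≤ residualRel s x y :=
  le_residualRel_iff.2 fun w => hs w y x

end ResidualRel

theorem residualRel_self {X Q : Type*} [Monoid Q] [CompleteLattice Q] [IsQuantale Q]
    (hunit : (1 : Q) = ⊤) (s : X → X → Q) (x : X) : residualRel s x x = ⊤ :=
  top_unique <| le_residualRel_iff.2 fun w => by rw [← hunit, mul_one]

theorem transitive_of_le_of_mul_le {X Q : Type*} [Mul Q] [Preorder Q] [MulLeftMono Q]
    {s q : X → X → Q} (hle : ∀ x y, s x y ≤ q x y)
    (hcomp : ∀ x y z, s x z * q z y ≤ s x y)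
    (x y z : X) : s x z * s z y ≤ s x y :=
  (mul_le_mul_right (hle z y) _).trans (hcomp x y z)

theorem quasi2_iff_exists_quasiMetric_general {X : Type*} {Q : Type*}
    [CommMonoid Q] [CompleteLattice Q] [IsQuantale Q]
    (hunit : (1 : Q) = ⊤) (s : X → X → Q) :
    (∀ x y z, s x z * s z y ≤ s x y) ↔
      (∃ q : X → X → Q,
        (∀ x, q x x = ⊤) ∧
        (∀ x y z, q x z * q z y ≤ q x y) ∧
        (∀ x y, s x y ≤ q x y) ∧
        (∀ x y z, s x z * q z y ≤ s x y)) := by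
  constructor
  · intro hs
    exact ⟨residualRel s, residualRel_self hunit s, residualRel_mul_le,
      le_residualRel_of_transitive hs, mul_residualRel_le⟩
  · rintro ⟨q, -, -, hle, hcomp⟩
    exact transitive_of_le_of_mul_le hle hcomp

theorem quasi2_iff_exists_quasiMetric {X : Type*} {Q : Type*}
    [CommMonoid Q] [CompleteLattice Q] [IsQuantale Q]
    (hunit : (1 : Q) = ⊤) (s : X → X → Q)
    (hqr : ∀ x y, s x y ≤ s x x) :
    (∀ x y z, s x z * s z y ≤ s x y) ↔
      (∃ q : X → X → Q,
        (∀ x, q x x = ⊤) ∧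
        (∀ x y z, q x z * q z y ≤ q x y) ∧
        (∀ x y, s x y ≤ q x y) ∧
        (∀ x y z, s x z * q z y ≤ s x y)) :=
  quasi2_iff_exists_quasiMetric_general hunit s
end

section
/- Let s be a quasi-reflexive Q-relation on X, with Q a commutative unital divisible quantale. If Θ^r_s(x,y) := s(x,x) ⊸ s(x,y) is a quasi-metric (i.e., Θ^r_s(x,x) = ⊤ and Θ^r_s(x,z) ⊗ Θ^r_s(z,y) ≤ Θ^r_s(x,y)), then s is a partial quasi-metric, i.e., s(x,z) ⊗ (s(z,z) ⊸ s(z,y)) ≤ s(x,y) for all x,y,z. -/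
/-- The residual `x ⊸ y = ⋁ {z | z * x ≤ y}` in a quantale. -/
def resid {Q : Type*} [Mul Q] [CompleteLattice Q] (x y : Q) : Q :=
  sSup {z | z * x ≤ y}

private lemma mul_le_mul_q {Q : Type*} [CommMonoid Q] [CompleteLattice Q] [IsQuantale Q]
    {a b c d : Q} (h1 : a ≤ b) (h2 : c ≤ d) : a * c ≤ b * d := by
  calc a * c ≤ b * c := by
        have : b * c = sSup {a, b} * c := by rw [sSup_pair, sup_eq_right.mpr h1]
        rw [this, sSup_mul_distrib]
        exact le_iSup₂_of_le a (Or.inl rfl) le_rfl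
    _ ≤ b * d := by
        have : b * d = b * sSup {c, d} := by rw [sSup_pair, sup_eq_right.mpr h2]
        rw [this, mul_sSup_distrib]
        exact le_iSup₂_of_le c (Or.inl rfl) le_rfl

theorem theta_quasiMetric_implies_partial_quasiMetric {X : Type*} {Q : Type*}
    [CommMonoid Q] [CompleteLattice Q] [IsQuantale Q]
    (hunit : (1 : Q) = ⊤)
    (hdiv : ∀ x y : Q, x ≤ y → y * resid y x = x)
    (s : X → X → Q)
    (hqr : ∀ x y, s x y ≤ s x x)
    (hrefl : ∀ x, resid (s x x) (s x x) = ⊤)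
    (htrans : ∀ x y z,
      resid (s x x) (s x z) * resid (s z z) (s z y) ≤ resid (s x x) (s x y)) :
    ∀ x y z, s x z * resid (s z z) (s z y) ≤ s x y := by
  intro x y z
  have h1 : s x x * resid (s x x) (s x z) = s x z := hdiv _ _ (hqr x z)
  have h2 : s x x * resid (s x x) (s x y) = s x y := hdiv _ _ (hqr x y)
  calc s x z * resid (s z z) (s z y)
      = s x x * (resid (s x x) (s x z) * resid (s z z) (s z y)) := by
        conv_lhs => rw [← h1, mul_assoc]
    _ ≤ s x x * resid (s x x) (s x y) := mul_le_mul_q le_rfl (htrans x y z)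
    _ = s x y := h2
end
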